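/- arXiv:1502.05197 — 5 statements merged into one kernel-verified Lean document; each statement's English description precedes it below -/
import Mathlib

section
/- (Theorem 1, part 1: invariance of the box.) Assume in addition that P_i ≤ 1 for every index i (so that P_i·a₃ ≤ 1 for every a in the unit sphere). Then for every W ∈ ℝ^G with 0 ≤ W_j ≤ 1/μ for all j, the vector T̂(W) satisfies 0 ≤ T̂_i(W) ≤ 1/μ for every i. -/
/-- The expression minimized over the unit sphere in the semi-Lagrangian operator:
`exp(−μh) Σ_j λ(i,a,j) W_j − τ P_i a₃ (1 − μ W_i)` with `τ = (1 − exp(−μh))/μ`. -/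
noncomputable def SLexpr (G : ℕ) (μ h : ℝ) (P : Fin G → ℝ)
    (lam : Fin G → EuclideanSpace ℝ (Fin 3) → Fin G → ℝ)
    (W : Fin G → ℝ) (i : Fin G) (a : EuclideanSpace ℝ (Fin 3)) : ℝ :=
  Real.exp (-(μ * h)) * (∑ j, lam i a j * W j)
    - ((1 - Real.exp (-(μ * h))) / μ) * (P i * a 2 * (1 - μ * W i))

/-- The semi-Lagrangian operator `T̂_i(W) = min_{a ∈ S²} SLexpr + τ`
(the minimum is the infimum over the compact sphere, where it is attained). -/
noncomputable def SLop (G : ℕ) (μ h : ℝ) (P : Fin G → ℝ)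
    (lam : Fin G → EuclideanSpace ℝ (Fin 3) → Fin G → ℝ)
    (W : Fin G → ℝ) (i : Fin G) : ℝ :=
  sInf (SLexpr G μ h P lam W i '' Metric.sphere (0 : EuclideanSpace ℝ (Fin 3)) 1)
    + (1 - Real.exp (-(μ * h))) / μ

/-!
On the unit sphere the sum `Σ_j λ(i,a,j) W_j` is a convex combination of the `W_j`, hence lies
in `[0, 1/μ]`, and `P_i a₃ (1 - μ W_i) ≤ 1`. So every value of the minimized expression is at
least `-τ`, which gives `T̂_i(W) ≥ 0`. For the upper bound, the pole `a = e₃` makes the drift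
term nonpositive, so the minimum is at most `e^{-μh}/μ`, and `e^{-μh}/μ + τ = 1/μ`.
-/

open Metric Set

lemma EuclideanSpace.apply_le_one_of_mem_sphere {n : ℕ} {a : EuclideanSpace ℝ (Fin n)}
    (ha : a ∈ sphere 0 1) (k : Fin n) : a k ≤ 1 := by
  have hk := PiLp.norm_apply_le a k
  rw [mem_sphere_zero_iff_norm.mp ha, Real.norm_eq_abs] at hk
  exact (abs_le.mp hk).2

lemma one_sub_exp_neg_mul_div_nonneg {μ h : ℝ} (hμ : 0 < μ) (hh : 0 ≤ h) :
    0 ≤ (1 - Real.exp (-(μ * h))) / μ := by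
  have : Real.exp (-(μ * h)) ≤ 1 := Real.exp_le_one_iff.mpr (by nlinarith)
  exact div_nonneg (by linarith) hμ.le

section SLexpr

variable {G : ℕ} {μ h : ℝ} {P : Fin G → ℝ}
  {lam : Fin G → EuclideanSpace ℝ (Fin 3) → Fin G → ℝ} {W : Fin G → ℝ} {i : Fin G}

lemma neg_le_SLexpr_of_mem_sphere (hμ : 0 < μ) (hh : 0 ≤ h) (hP0 : 0 ≤ P i) (hP1 : P i ≤ 1)
    (hWi : W i ∈ Icc 0 (1 / μ)) {a : EuclideanSpace ℝ (Fin 3)} (ha : a ∈ sphere 0 1)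
    (hmean : 0 ≤ ∑ j, lam i a j * W j) :
    -((1 - Real.exp (-(μ * h))) / μ) ≤ SLexpr G μ h P lam W i a := by
  have hμW : μ * W i ∈ Icc 0 1 :=
    ⟨mul_nonneg hμ.le hWi.1, by simpa [hμ.ne'] using mul_le_mul_of_nonneg_left hWi.2 hμ.le⟩
  have hdrift : P i * a 2 * (1 - μ * W i) ≤ 1 := by
    have hc : P i * (1 - μ * W i) ∈ Icc 0 1 :=
      ⟨mul_nonneg hP0 (by linarith [hμW.2]), by nlinarith [hμW.1, hμW.2]⟩
    calc P i * a 2 * (1 - μ * W i) = P i * (1 - μ * W i) * a 2 := by ring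
      _ ≤ P i * (1 - μ * W i) * 1 :=
        mul_le_mul_of_nonneg_left (EuclideanSpace.apply_le_one_of_mem_sphere ha 2) hc.1
      _ ≤ 1 := by linarith [hc.2]
  have hτ := one_sub_exp_neg_mul_div_nonneg hμ hh
  unfold SLexpr
  linarith [mul_nonneg (Real.exp_pos (-(μ * h))).le hmean, mul_le_mul_of_nonneg_left hdrift hτ]

lemma SLexpr_single_two_le (hμ : 0 < μ) (hh : 0 ≤ h) (hP0 : 0 ≤ P i) (hWi : W i ≤ 1 / μ)
    (hmean : ∑ j, lam i (EuclideanSpace.single 2 1) j * W j ≤ 1 / μ) :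
    SLexpr G μ h P lam W i (EuclideanSpace.single 2 1) ≤ Real.exp (-(μ * h)) / μ := by
  have hdrift : 0 ≤ P i * (1 - μ * W i) := by
    have : μ * W i ≤ 1 := by simpa [hμ.ne'] using mul_le_mul_of_nonneg_left hWi hμ.le
    exact mul_nonneg hP0 (by linarith)
  have hτ := one_sub_exp_neg_mul_div_nonneg hμ hh
  have he := mul_le_mul_of_nonneg_left hmean (Real.exp_pos (-(μ * h))).le
  rw [mul_one_div] at he
  simp only [SLexpr, PiLp.single_apply, if_true, mul_one]
  linarith [mul_nonneg hτ hdrift]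

end SLexpr

theorem sl_box_invariance_general (G : ℕ) (μ h : ℝ) (hμ : 0 < μ) (hh : 0 < h)
    (P : Fin G → ℝ) (hP0 : ∀ i, 0 ≤ P i) (hP1 : ∀ i, P i ≤ 1)
    (lam : Fin G → EuclideanSpace ℝ (Fin 3) → Fin G → ℝ)
    (hlam0 : ∀ i, ∀ a ∈ Metric.sphere (0 : EuclideanSpace ℝ (Fin 3)) 1, ∀ j, 0 ≤ lam i a j)
    (hlam1 : ∀ i, ∀ a ∈ Metric.sphere (0 : EuclideanSpace ℝ (Fin 3)) 1, ∑ j, lam i a j = 1)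
    (W : Fin G → ℝ) (hW : ∀ j, 0 ≤ W j ∧ W j ≤ 1 / μ) :
    ∀ i, 0 ≤ SLop G μ h P lam W i ∧ SLop G μ h P lam W i ≤ 1 / μ := by
  intro i
  have hmean : ∀ a ∈ sphere (0 : EuclideanSpace ℝ (Fin 3)) 1,
      ∑ j, lam i a j * W j ∈ Icc 0 (1 / μ) := fun a ha =>
    (convex_Icc 0 (1 / μ)).sum_mem (fun j _ => hlam0 i a ha j) (hlam1 i a ha) (fun j _ => hW j)
  have hlow : ∀ x ∈ SLexpr G μ h P lam W i '' sphere 0 1,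
      -((1 - Real.exp (-(μ * h))) / μ) ≤ x := by
    rintro _ ⟨a, ha, rfl⟩
    exact neg_le_SLexpr_of_mem_sphere hμ hh.le (hP0 i) (hP1 i) (hW i) ha (hmean a ha).1
  have hpole : EuclideanSpace.single (2 : Fin 3) (1 : ℝ) ∈ sphere 0 1 := by simp
  have hinf_ge := le_csInf ⟨_, mem_image_of_mem _ hpole⟩ hlow
  have hinf_le := (csInf_le ⟨_, hlow⟩ (mem_image_of_mem _ hpole)).trans
    (SLexpr_single_two_le hμ hh.le (hP0 i) (hW i).2 (hmean _ hpole).2)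
  have hsplit : Real.exp (-(μ * h)) / μ + (1 - Real.exp (-(μ * h))) / μ = 1 / μ := by ring
  unfold SLop
  constructor <;> linarith

/-- Theorem 1, part 1: invariance of the box `[0, 1/μ]^G` under `T̂`
when `P_i ≤ 1` for every `i`. -/
theorem sl_box_invariance (G : ℕ) (hG : 1 ≤ G) (μ h : ℝ) (hμ : 0 < μ) (hh : 0 < h)
    (P : Fin G → ℝ) (hP0 : ∀ i, 0 ≤ P i) (hP1 : ∀ i, P i ≤ 1)
    (lam : Fin G → EuclideanSpace ℝ (Fin 3) → Fin G → ℝ)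
    (hlam0 : ∀ i, ∀ a ∈ Metric.sphere (0 : EuclideanSpace ℝ (Fin 3)) 1, ∀ j, 0 ≤ lam i a j)
    (hlam1 : ∀ i, ∀ a ∈ Metric.sphere (0 : EuclideanSpace ℝ (Fin 3)) 1, ∑ j, lam i a j = 1)
    (hlamc : ∀ i j, ContinuousOn (fun a => lam i a j)
      (Metric.sphere (0 : EuclideanSpace ℝ (Fin 3)) 1))
    (W : Fin G → ℝ) (hW : ∀ j, 0 ≤ W j ∧ W j ≤ 1 / μ) :
    ∀ i, 0 ≤ SLop G μ h P lam W i ∧ SLop G μ h P lam W i ≤ 1 / μ :=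
  sl_box_invariance_general G μ h hμ hh P hP0 hP1 lam hlam0 hlam1 W hW
end

section
/- (Theorem 1, part 2: monotonicity.) Let W, W̄ ∈ ℝ^G with W_j ≤ W̄_j for all j. Assume that for every index i the minimum defining T̂_i(W̄) is attained at some ā ∈ S² with ā₃ ≥ 0. Then T̂_i(W) ≤ T̂_i(W̄) for every i. -/
/-! At a minimizer `ā` of `T̂_i(W̄)` the expression for `W` is no larger than the one for `W̄`:
the averaging term is monotone because the weights `λ(i,ā,·)` are nonnegative, and the transport
term `-τ P_i ā₃ (1 - μ W_i)` is monotone in `W_i` because `τ P_i ā₃ μ ≥ 0` — this is where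
`ā₃ ≥ 0` enters. Hence `T̂_i(W) ≤ SLexpr(W, ā) + τ ≤ SLexpr(W̄, ā) + τ = T̂_i(W̄)`; the infimum
for `W` is a genuine lower bound since a continuous function is bounded below on the sphere. -/

lemma sl_tau_nonneg {μ h : ℝ} (hμ : 0 ≤ μ) (hh : 0 ≤ h) :
    0 ≤ (1 - Real.exp (-(μ * h))) / μ := by
  have : Real.exp (-(μ * h)) ≤ 1 := Real.exp_le_one_iff.mpr (by nlinarith)
  exact div_nonneg (by linarith) hμ

lemma SLexpr_mono {G : ℕ} {μ h : ℝ} (hμ : 0 ≤ μ) (hh : 0 ≤ h) {P : Fin G → ℝ}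
    {lam : Fin G → EuclideanSpace ℝ (Fin 3) → Fin G → ℝ} {W Wbar : Fin G → ℝ} {i : Fin G}
    {a : EuclideanSpace ℝ (Fin 3)} (hlam : ∀ j, 0 ≤ lam i a j) (hPa : 0 ≤ P i * a 2)
    (hle : ∀ j, W j ≤ Wbar j) :
    SLexpr G μ h P lam W i a ≤ SLexpr G μ h P lam Wbar i a := by
  have hsum : ∑ j, lam i a j * W j ≤ ∑ j, lam i a j * Wbar j :=
    Finset.sum_le_sum fun j _ => mul_le_mul_of_nonneg_left (hle j) (hlam j)
  have htransport : 1 - μ * Wbar i ≤ 1 - μ * W i := by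
    nlinarith [mul_le_mul_of_nonneg_left (hle i) hμ]
  unfold SLexpr
  gcongr
  exact sl_tau_nonneg hμ hh

lemma continuousOn_SLexpr {G : ℕ} {μ h : ℝ} {P : Fin G → ℝ}
    {lam : Fin G → EuclideanSpace ℝ (Fin 3) → Fin G → ℝ} {W : Fin G → ℝ} {i : Fin G}
    {s : Set (EuclideanSpace ℝ (Fin 3))} (hlamc : ∀ j, ContinuousOn (fun a => lam i a j) s) :
    ContinuousOn (SLexpr G μ h P lam W i) s := by
  have hcoord : Continuous fun a : EuclideanSpace ℝ (Fin 3) => a 2 :=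
    (EuclideanSpace.proj (2 : Fin 3)).continuous
  unfold SLexpr
  exact (continuousOn_const.mul (continuousOn_finsetSum _ fun j _ =>
    (hlamc j).mul continuousOn_const)).sub
      (continuousOn_const.mul ((continuousOn_const.mul hcoord.continuousOn).mul continuousOn_const))

theorem sl_monotone_general (G : ℕ) (μ h : ℝ) (hμ : 0 < μ) (hh : 0 < h)
    (P : Fin G → ℝ) (hP0 : ∀ i, 0 ≤ P i)
    (lam : Fin G → EuclideanSpace ℝ (Fin 3) → Fin G → ℝ)
    (hlam0 : ∀ i, ∀ a ∈ Metric.sphere (0 : EuclideanSpace ℝ (Fin 3)) 1, ∀ j, 0 ≤ lam i a j)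
    (hlamc : ∀ i j, ContinuousOn (fun a => lam i a j)
      (Metric.sphere (0 : EuclideanSpace ℝ (Fin 3)) 1))
    (W Wbar : Fin G → ℝ) (hle : ∀ j, W j ≤ Wbar j)
    (hattain : ∀ i, ∃ abar ∈ Metric.sphere (0 : EuclideanSpace ℝ (Fin 3)) 1,
      0 ≤ abar 2 ∧ SLexpr G μ h P lam Wbar i abar =
        sInf (SLexpr G μ h P lam Wbar i '' Metric.sphere (0 : EuclideanSpace ℝ (Fin 3)) 1)) :
    ∀ i, SLop G μ h P lam W i ≤ SLop G μ h P lam Wbar i := by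
  intro i
  obtain ⟨abar, habar, ha3, hmin⟩ := hattain i
  have hbdd : BddBelow (SLexpr G μ h P lam W i '' Metric.sphere 0 1) :=
    ((isCompact_sphere _ _).image_of_continuousOn (continuousOn_SLexpr (hlamc i))).bddBelow
  unfold SLop
  gcongr ?_ + _
  calc sInf (SLexpr G μ h P lam W i '' Metric.sphere 0 1)
      ≤ SLexpr G μ h P lam W i abar := csInf_le hbdd ⟨abar, habar, rfl⟩
    _ ≤ SLexpr G μ h P lam Wbar i abar :=
        SLexpr_mono hμ.le hh.le (hlam0 i abar habar) (mul_nonneg (hP0 i) ha3) hle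
    _ = _ := hmin

/-- Theorem 1, part 2: monotonicity of `T̂`.  If `W ≤ W̄` componentwise and, for each `i`,
the minimum defining `T̂_i(W̄)` is attained at some `ā ∈ S²` with `ā₃ ≥ 0`, then
`T̂_i(W) ≤ T̂_i(W̄)` for every `i`. -/
theorem sl_monotone (G : ℕ) (hG : 1 ≤ G) (μ h : ℝ) (hμ : 0 < μ) (hh : 0 < h)
    (P : Fin G → ℝ) (hP0 : ∀ i, 0 ≤ P i)
    (lam : Fin G → EuclideanSpace ℝ (Fin 3) → Fin G → ℝ)
    (hlam0 : ∀ i, ∀ a ∈ Metric.sphere (0 : EuclideanSpace ℝ (Fin 3)) 1, ∀ j, 0 ≤ lam i a j)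
    (hlam1 : ∀ i, ∀ a ∈ Metric.sphere (0 : EuclideanSpace ℝ (Fin 3)) 1, ∑ j, lam i a j = 1)
    (hlamc : ∀ i j, ContinuousOn (fun a => lam i a j)
      (Metric.sphere (0 : EuclideanSpace ℝ (Fin 3)) 1))
    (W Wbar : Fin G → ℝ) (hle : ∀ j, W j ≤ Wbar j)
    (hattain : ∀ i, ∃ abar ∈ Metric.sphere (0 : EuclideanSpace ℝ (Fin 3)) 1,
      0 ≤ abar 2 ∧ SLexpr G μ h P lam Wbar i abar =
        sInf (SLexpr G μ h P lam Wbar i '' Metric.sphere (0 : EuclideanSpace ℝ (Fin 3)) 1)) :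
    ∀ i, SLop G μ h P lam W i ≤ SLop G μ h P lam Wbar i :=
  sl_monotone_general G μ h hμ hh P hP0 lam hlam0 hlamc W Wbar hle hattain
end

section
/- (Theorem 1, part 3: contraction estimate.) Let p ≥ 0 be such that P_i ≤ p for every index i. Then for all W, W̄ ∈ ℝ^G one has max_i |T̂_i(W) − T̂_i(W̄)| ≤ (exp(−μh) + (1 − exp(−μh))·p) · max_j |W_j − W̄_j|. In particular, if p < 1 then T̂ is a contraction mapping on ℝ^G with respect to the supremum norm. -/
open Finset

lemma abs_sum_mul_le_of_sum_eq_one {ι : Type*} [Fintype ι] {w x : ι → ℝ} {M : ℝ}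
    (hw0 : ∀ j, 0 ≤ w j) (hw1 : ∑ j, w j = 1) (hx : ∀ j, |x j| ≤ M) :
    |∑ j, w j * x j| ≤ M :=
  calc |∑ j, w j * x j| ≤ ∑ j, w j * |x j| :=
        (abs_sum_le_sum_abs _ _).trans_eq <|
          sum_congr rfl fun j _ => by rw [abs_mul, abs_of_nonneg (hw0 j)]
    _ ≤ ∑ j, w j * M := sum_le_sum fun j _ => mul_le_mul_of_nonneg_left (hx j) (hw0 j)
    _ = M := by rw [← sum_mul, hw1, one_mul]

section InfOverSet

variable {α : Type*} {s : Set α} {f g : α → ℝ} {C : ℝ}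

lemma bddBelow_image_of_abs_sub_le (hg : BddBelow (g '' s)) (hfg : ∀ a ∈ s, |f a - g a| ≤ C) :
    BddBelow (f '' s) := by
  obtain ⟨m, hm⟩ := hg
  refine ⟨m - C, ?_⟩
  rintro _ ⟨a, ha, rfl⟩
  linarith [hm ⟨a, ha, rfl⟩, (abs_le.1 (hfg a ha)).1]

lemma csInf_image_le_csInf_image_add (hs : s.Nonempty) (hf : BddBelow (f '' s))
    (hfg : ∀ a ∈ s, f a ≤ g a + C) : sInf (f '' s) ≤ sInf (g '' s) + C := by
  rw [← sub_le_iff_le_add]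
  refine le_csInf (hs.image g) ?_
  rintro _ ⟨a, ha, rfl⟩
  linarith [csInf_le hf (Set.mem_image_of_mem f ha), hfg a ha]

lemma abs_csInf_image_sub_le (hs : s.Nonempty) (hf : BddBelow (f '' s))
    (hg : BddBelow (g '' s)) (hfg : ∀ a ∈ s, |f a - g a| ≤ C) :
    |sInf (f '' s) - sInf (g '' s)| ≤ C := by
  rw [abs_sub_le_iff, sub_le_iff_le_add', sub_le_iff_le_add']
  refine ⟨?_, ?_⟩
  · exact csInf_image_le_csInf_image_add hs hf fun a ha => by
      linarith [(abs_le.1 (hfg a ha)).2]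
  · exact csInf_image_le_csInf_image_add hs hg fun a ha => by
      linarith [(abs_le.1 (hfg a ha)).1]

end InfOverSet

lemma abs_apply_le_one_of_mem_sphere {n : ℕ} {a : EuclideanSpace ℝ (Fin n)}
    (ha : a ∈ Metric.sphere (0 : EuclideanSpace ℝ (Fin n)) 1) (k : Fin n) : |a k| ≤ 1 := by
  rw [mem_sphere_zero_iff_norm] at ha
  simpa only [Real.norm_eq_abs, ha] using PiLp.norm_apply_le a k

lemma exp_neg_mul_le_one {μ h : ℝ} (hμ : 0 ≤ μ) (hh : 0 ≤ h) : Real.exp (-(μ * h)) ≤ 1 :=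
  Real.exp_le_one_iff.2 (neg_nonpos.2 (mul_nonneg hμ hh))

section SemiLagrangian

variable {G : ℕ} {μ h : ℝ} {P : Fin G → ℝ} {lam : Fin G → EuclideanSpace ℝ (Fin 3) → Fin G → ℝ}

lemma SLexpr_sub_SLexpr (hμ : 0 < μ) (W Wbar : Fin G → ℝ) (i : Fin G)
    (a : EuclideanSpace ℝ (Fin 3)) :
    SLexpr G μ h P lam W i a - SLexpr G μ h P lam Wbar i a =
      Real.exp (-(μ * h)) * ∑ j, lam i a j * (W j - Wbar j)
        + (1 - Real.exp (-(μ * h))) * (P i * a 2 * (W i - Wbar i)) := by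
  simp only [SLexpr, mul_sub, sum_sub_distrib]
  field_simp
  ring

lemma abs_SLexpr_sub_le (hμ : 0 < μ) (hh : 0 ≤ h) {i : Fin G} (hP0 : 0 ≤ P i) {p : ℝ}
    (hPp : P i ≤ p) {W Wbar : Fin G → ℝ} {M : ℝ} (hM : ∀ j, |W j - Wbar j| ≤ M)
    {a : EuclideanSpace ℝ (Fin 3)}
    (ha : a ∈ Metric.sphere (0 : EuclideanSpace ℝ (Fin 3)) 1)
    (hlam0 : ∀ j, 0 ≤ lam i a j) (hlam1 : ∑ j, lam i a j = 1) :
    |SLexpr G μ h P lam W i a - SLexpr G μ h P lam Wbar i a| ≤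
      (Real.exp (-(μ * h)) + (1 - Real.exp (-(μ * h))) * p) * M := by
  have hE1 := exp_neg_mul_le_one hμ.le hh
  have hinterp : |∑ j, lam i a j * (W j - Wbar j)| ≤ M :=
    abs_sum_mul_le_of_sum_eq_one hlam0 hlam1 hM
  have hcontrol : |P i * a 2 * (W i - Wbar i)| ≤ p * M := by
    have ha2 := abs_apply_le_one_of_mem_sphere ha 2
    have hMi := hM i
    have hp : 0 ≤ p := hP0.trans hPp
    rw [abs_mul, abs_mul, abs_of_nonneg hP0]
    calc P i * |a 2| * |W i - Wbar i| ≤ p * 1 * M := by gcongr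
      _ = p * M := by ring
  rw [SLexpr_sub_SLexpr hμ]
  calc _ ≤ Real.exp (-(μ * h)) * |∑ j, lam i a j * (W j - Wbar j)|
          + (1 - Real.exp (-(μ * h))) * |P i * a 2 * (W i - Wbar i)| := by
        refine (abs_add_le _ _).trans_eq ?_
        rw [abs_mul (Real.exp _), abs_mul (1 - _), abs_of_pos (Real.exp_pos _),
          abs_of_nonneg (sub_nonneg.2 hE1)]
    _ ≤ Real.exp (-(μ * h)) * M + (1 - Real.exp (-(μ * h))) * (p * M) := by
        gcongr
    _ = _ := by ring

lemma bddBelow_SLexpr_zero_image (hμ : 0 < μ) (hh : 0 ≤ h) {i : Fin G} (hP0 : 0 ≤ P i) :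
    BddBelow (SLexpr G μ h P lam 0 i '' Metric.sphere (0 : EuclideanSpace ℝ (Fin 3)) 1) := by
  refine ⟨-((1 - Real.exp (-(μ * h))) / μ * P i), ?_⟩
  rintro _ ⟨a, ha, rfl⟩
  have hτ : 0 ≤ (1 - Real.exp (-(μ * h))) / μ :=
    div_nonneg (sub_nonneg.2 (exp_neg_mul_le_one hμ.le hh)) hμ.le
  have ha2 : a 2 ≤ 1 := (abs_le.1 (abs_apply_le_one_of_mem_sphere ha 2)).2
  simp only [SLexpr, Pi.zero_apply, mul_zero, sum_const_zero, sub_zero, mul_one, zero_sub,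
    neg_le_neg_iff]
  exact mul_le_mul_of_nonneg_left (mul_le_of_le_one_right hP0 ha2) hτ

variable (hlam0 : ∀ i, ∀ a ∈ Metric.sphere (0 : EuclideanSpace ℝ (Fin 3)) 1, ∀ j, 0 ≤ lam i a j)
  (hlam1 : ∀ i, ∀ a ∈ Metric.sphere (0 : EuclideanSpace ℝ (Fin 3)) 1, ∑ j, lam i a j = 1)
include hlam0 hlam1

lemma bddBelow_SLexpr_image (hμ : 0 < μ) (hh : 0 ≤ h) {i : Fin G} (hP0 : 0 ≤ P i)
    (W : Fin G → ℝ) :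
    BddBelow (SLexpr G μ h P lam W i '' Metric.sphere (0 : EuclideanSpace ℝ (Fin 3)) 1) :=
  bddBelow_image_of_abs_sub_le (bddBelow_SLexpr_zero_image hμ hh hP0) fun a ha =>
    abs_SLexpr_sub_le hμ hh hP0 le_rfl
      (fun j => by simpa using single_le_sum (fun k _ => abs_nonneg (W k)) (mem_univ j)) ha
      (hlam0 i a ha) (hlam1 i a ha)

lemma abs_SLop_sub_le (hμ : 0 < μ) (hh : 0 ≤ h) (hP0 : ∀ i, 0 ≤ P i) {p : ℝ}
    (hPp : ∀ i, P i ≤ p) {W Wbar : Fin G → ℝ} {M : ℝ} (hM : ∀ j, |W j - Wbar j| ≤ M)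
    (i : Fin G) :
    |SLop G μ h P lam W i - SLop G μ h P lam Wbar i| ≤
      (Real.exp (-(μ * h)) + (1 - Real.exp (-(μ * h))) * p) * M := by
  rw [SLop, SLop, add_sub_add_right_eq_sub]
  exact abs_csInf_image_sub_le (NormedSpace.sphere_nonempty.2 zero_le_one)
    (bddBelow_SLexpr_image hlam0 hlam1 hμ hh (hP0 i) W)
    (bddBelow_SLexpr_image hlam0 hlam1 hμ hh (hP0 i) Wbar) fun a ha =>
      abs_SLexpr_sub_le hμ hh (hP0 i) (hPp i) hM ha (hlam0 i a ha) (hlam1 i a ha)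

end SemiLagrangian

theorem sl_contraction_general (G : ℕ) (μ h : ℝ) (hμ : 0 < μ) (hh : 0 < h)
    (P : Fin G → ℝ) (hP0 : ∀ i, 0 ≤ P i)
    (lam : Fin G → EuclideanSpace ℝ (Fin 3) → Fin G → ℝ)
    (hlam0 : ∀ i, ∀ a ∈ Metric.sphere (0 : EuclideanSpace ℝ (Fin 3)) 1, ∀ j, 0 ≤ lam i a j)
    (hlam1 : ∀ i, ∀ a ∈ Metric.sphere (0 : EuclideanSpace ℝ (Fin 3)) 1, ∑ j, lam i a j = 1)
    (p : ℝ) (hp : 0 ≤ p) (hPp : ∀ i, P i ≤ p) :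
    (∀ W Wbar : Fin G → ℝ,
      (⨆ i, |SLop G μ h P lam W i - SLop G μ h P lam Wbar i|) ≤
        (Real.exp (-(μ * h)) + (1 - Real.exp (-(μ * h))) * p) * ⨆ j, |W j - Wbar j|) ∧
    (p < 1 → Real.exp (-(μ * h)) + (1 - Real.exp (-(μ * h))) * p < 1) := by
  have hE : Real.exp (-(μ * h)) < 1 := Real.exp_lt_one_iff.2 (neg_neg_of_pos (mul_pos hμ hh))
  refine ⟨fun W Wbar => ?_, fun hp1 => by linarith [mul_lt_mul_of_pos_left hp1 (sub_pos.2 hE)]⟩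
  have hM : ∀ j, |W j - Wbar j| ≤ ⨆ j, |W j - Wbar j| :=
    le_ciSup (Set.finite_range _).bddAbove
  have hL : 0 ≤ Real.exp (-(μ * h)) + (1 - Real.exp (-(μ * h))) * p :=
    add_nonneg (Real.exp_pos _).le (mul_nonneg (sub_nonneg.2 hE.le) hp)
  exact Real.iSup_le (abs_SLop_sub_le hlam0 hlam1 hμ hh.le hP0 hPp hM)
    (mul_nonneg hL (Real.iSup_nonneg fun _ => abs_nonneg _))

/-- Theorem 1, part 3: contraction estimate.  If `P_i ≤ p` for every `i`, then
`max_i |T̂_i(W) − T̂_i(W̄)| ≤ (exp(−μh) + (1 − exp(−μh))·p) · max_j |W_j − W̄_j|`;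
in particular, if `p < 1` the Lipschitz constant `exp(−μh) + (1 − exp(−μh))·p` is `< 1`,
so `T̂` is a contraction with respect to the supremum norm. -/
theorem sl_contraction (G : ℕ) (hG : 1 ≤ G) (μ h : ℝ) (hμ : 0 < μ) (hh : 0 < h)
    (P : Fin G → ℝ) (hP0 : ∀ i, 0 ≤ P i)
    (lam : Fin G → EuclideanSpace ℝ (Fin 3) → Fin G → ℝ)
    (hlam0 : ∀ i, ∀ a ∈ Metric.sphere (0 : EuclideanSpace ℝ (Fin 3)) 1, ∀ j, 0 ≤ lam i a j)
    (hlam1 : ∀ i, ∀ a ∈ Metric.sphere (0 : EuclideanSpace ℝ (Fin 3)) 1, ∑ j, lam i a j = 1)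
    (hlamc : ∀ i j, ContinuousOn (fun a => lam i a j)
      (Metric.sphere (0 : EuclideanSpace ℝ (Fin 3)) 1))
    (p : ℝ) (hp : 0 ≤ p) (hPp : ∀ i, P i ≤ p) :
    (∀ W Wbar : Fin G → ℝ,
      (⨆ i, |SLop G μ h P lam W i - SLop G μ h P lam Wbar i|) ≤
        (Real.exp (-(μ * h)) + (1 - Real.exp (-(μ * h))) * p) * ⨆ j, |W j - Wbar j|) ∧
    (p < 1 → Real.exp (-(μ * h)) + (1 - Real.exp (-(μ * h))) * p < 1) :=
  sl_contraction_general G μ h hμ hh P hP0 lam hlam0 hlam1 p hp hPp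
end

section
/- Let k_D, k_S ≥ 0 with k_D + k_S = 1, and let I be a real number with 0 < I ≤ 1. Set I₊ := I + k_S, I₋ := I − k_S, Q := k_D² + 8k_S² + 8·I·k_S, and f := √((k_D² − 2·I₊·I₋ + k_D·√Q)/(2·I₊²)). Then for every real p ≥ 0, the equation I·(1 + p²) − k_S·(1 − p²) − k_D·√(1 + p²) = 0 holds if and only if p = f. In particular the equation has exactly one nonnegative solution. -/
/-!
Writing `s = √(1 + p²) ≥ 1` and `I₊ = I + k_S`, the identity `k_S (1 - p²) = k_S (2 - s²)` turns
the brightness equation into the quadratic `I₊ s² - k_D s - 2 k_S = 0`, whose discriminant is `Q`.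
Its roots have product `-2 k_S / I₊ ≤ 0`, so the only candidate for `s > 0` is the larger root
`r = (k_D + √Q) / (2 I₊)`; since the quadratic is `I - 1 ≤ 0` at `s = 1`, this root is at least `1`,
and `p = √(r² - 1)`, which is the closed form `f`.
-/

open Real

/-- The larger root of `a x² - b x - c`. -/
noncomputable def quadraticPosRoot (a b c : ℝ) : ℝ := (b + √(b ^ 2 + 4 * a * c)) / (2 * a)

lemma eq_quadraticPosRoot_iff {a b c x : ℝ} (ha : 0 < a) (hc : 0 ≤ c) (hx : 0 < x) :
    a * x ^ 2 - b * x - c = 0 ↔ x = quadraticPosRoot a b c := by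
  have hD : 0 ≤ b ^ 2 + 4 * a * c := by positivity
  have hdiscrim : discrim a (-b) (-c) = √(b ^ 2 + 4 * a * c) * √(b ^ 2 + 4 * a * c) := by
    rw [mul_self_sqrt hD, discrim]; ring
  have hneg_root : b - √(b ^ 2 + 4 * a * c) ≤ 0 :=
    sub_nonpos.2 ((le_abs_self b).trans (abs_le_sqrt (by nlinarith [mul_nonneg ha.le hc])))
  have hquad : a * x ^ 2 - b * x - c = a * (x * x) + -b * x + -c := by ring
  rw [hquad, quadratic_eq_zero_iff ha.ne' hdiscrim, neg_neg, quadraticPosRoot,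
    or_iff_left]
  rintro rfl
  exact hx.not_ge (div_nonpos_of_nonpos_of_nonneg hneg_root (by positivity))

lemma one_le_quadraticPosRoot {a b c : ℝ} (ha : 0 < a) (h : a ≤ b + c) :
    1 ≤ quadraticPosRoot a b c := by
  rw [quadraticPosRoot, one_le_div (by positivity), ← sub_le_iff_le_add']
  rcases le_or_gt (2 * a - b) 0 with hle | hpos
  · exact hle.trans (sqrt_nonneg _)
  · exact (le_sqrt hpos.le (by nlinarith)).2 (by nlinarith)

lemma quadraticPosRoot_sq_sub_one {a b c : ℝ} (ha : 0 < a) (hc : 0 ≤ c) :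
    quadraticPosRoot a b c ^ 2 - 1 =
      (b ^ 2 + 2 * a * c - 2 * a ^ 2 + b * √(b ^ 2 + 4 * a * c)) / (2 * a ^ 2) := by
  have hsq := sq_sqrt (show 0 ≤ b ^ 2 + 4 * a * c by positivity)
  rw [quadraticPosRoot, div_pow, div_sub_one (by positivity),
    div_eq_div_iff (by positivity) (by positivity)]
  linear_combination 2 * a ^ 2 * hsq

lemma sqrt_one_add_sq_eq_iff {p r : ℝ} (hp : 0 ≤ p) (hr : 1 ≤ r) :
    √(1 + p ^ 2) = r ↔ p = √(r ^ 2 - 1) := by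
  rw [sqrt_eq_iff_eq_sq (by positivity) (by linarith),
    eq_comm (a := p), sqrt_eq_iff_eq_sq (by nlinarith) hp]
  constructor <;> intro h <;> linarith

theorem phong_eikonal_general (kD kS : ℝ) (hkS : 0 ≤ kS) (hsum : kD + kS = 1)
    (I : ℝ) (hI0 : 0 < I) (hI1 : I ≤ 1)
    (Ip Im Q f : ℝ) (hIp : Ip = I + kS) (hIm : Im = I - kS)
    (hQ : Q = kD ^ 2 + 8 * kS ^ 2 + 8 * I * kS)
    (hf : f = Real.sqrt ((kD ^ 2 - 2 * Ip * Im + kD * Real.sqrt Q) / (2 * Ip ^ 2))) :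
    (∀ p : ℝ, 0 ≤ p →
      (I * (1 + p ^ 2) - kS * (1 - p ^ 2) - kD * Real.sqrt (1 + p ^ 2) = 0 ↔ p = f)) ∧
    (∃! p : ℝ, 0 ≤ p ∧
      I * (1 + p ^ 2) - kS * (1 - p ^ 2) - kD * Real.sqrt (1 + p ^ 2) = 0) := by
  have hIp0 : 0 < Ip := by linarith
  have hc : 0 ≤ 2 * kS := by linarith
  set r := quadraticPosRoot Ip kD (2 * kS)
  have hr : 1 ≤ r := one_le_quadraticPosRoot hIp0 (by linarith)
  have hf_eq : f = √(r ^ 2 - 1) := by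
    rw [hf, quadraticPosRoot_sq_sub_one hIp0 hc, hQ, hIp, hIm]
    ring_nf
  have key : ∀ p : ℝ, 0 ≤ p →
      (I * (1 + p ^ 2) - kS * (1 - p ^ 2) - kD * √(1 + p ^ 2) = 0 ↔ p = f) := by
    intro p hp
    have hs := sq_sqrt (show 0 ≤ 1 + p ^ 2 by positivity)
    have hquad : I * (1 + p ^ 2) - kS * (1 - p ^ 2) - kD * √(1 + p ^ 2) =
        Ip * √(1 + p ^ 2) ^ 2 - kD * √(1 + p ^ 2) - 2 * kS := by
      rw [hs, hIp]; ring
    rw [hquad, eq_quadraticPosRoot_iff hIp0 hc (by positivity), hf_eq]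
    exact sqrt_one_add_sq_eq_iff hp hr
  have hf0 : 0 ≤ f := hf ▸ sqrt_nonneg _
  exact ⟨key, f, ⟨hf0, (key f hf0).2 rfl⟩, fun p hp => (key p hp.1).1 hp.2⟩

/-- Eikonal form of the Phong Shape-from-Shading equation with vertical light source and
vertical observer: with `k_D + k_S = 1` and `0 < I ≤ 1`, for nonnegative `p` the equation
`I(1 + p²) − k_S(1 − p²) − k_D√(1 + p²) = 0` holds iff `p = f`, where
`f = √((k_D² − 2I₊I₋ + k_D√Q)/(2I₊²))`; in particular the equation has exactly one
nonnegative solution. -/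
theorem phong_eikonal (kD kS : ℝ) (hkD : 0 ≤ kD) (hkS : 0 ≤ kS) (hsum : kD + kS = 1)
    (I : ℝ) (hI0 : 0 < I) (hI1 : I ≤ 1)
    (Ip Im Q f : ℝ) (hIp : Ip = I + kS) (hIm : Im = I - kS)
    (hQ : Q = kD ^ 2 + 8 * kS ^ 2 + 8 * I * kS)
    (hf : f = Real.sqrt ((kD ^ 2 - 2 * Ip * Im + kD * Real.sqrt Q) / (2 * Ip ^ 2))) :
    (∀ p : ℝ, 0 ≤ p →
      (I * (1 + p ^ 2) - kS * (1 - p ^ 2) - kD * Real.sqrt (1 + p ^ 2) = 0 ↔ p = f)) ∧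
    (∃! p : ℝ, 0 ≤ p ∧
      I * (1 + p ^ 2) - kS * (1 - p ^ 2) - kD * Real.sqrt (1 + p ^ 2) = 0) :=
  phong_eikonal_general kD kS hkS hsum I hI0 hI1 Ip Im Q f hIp hIm hQ hf
end

section
/- Let ω = (ω₁, ω₂, ω₃) ∈ ℝ³ be a unit vector with ω₃ > 0, let μ > 0, and let I ≥ 0 be a real number. Let u : ℝ² → ℝ be differentiable at a point x, and set v := (1 − exp(−μu))/μ. Then the Lambertian Hamilton–Jacobi equation I·√(1 + ‖∇u(x)‖²) + (ω₁, ω₂)·∇u(x) − ω₃ = 0 holds if and only if μ·v(x) = min over a = (a₁,a₂,a₃) in the unit sphere of ℝ³ of { (1/ω₃)·((I·a₁ − ω₁)·∂₁v(x) + (I·a₂ − ω₂)·∂₂v(x)) − (I·a₃/ω₃)·(1 − μ·v(x)) + 1 }. -/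
/-!
The Kružkov transform `v = (1 - e^{-μu})/μ` has `∇v = e^{-μu} ∇u` and `1 - μv = e^{-μu}`, so the
function minimised is affine on the sphere: `a ↦ ⟪c, a⟫ + d` with
`c = (I e^{-μu} / ω₃) (∇u, -1)`. Its minimum over the unit sphere is `d - ‖c‖`, attained at
`-c / ‖c‖`, and `‖(∇u, -1)‖ = √(1 + |∇u|²)`. The fixed-point equation thus reads
`e^{-μu} / ω₃ · (I √(1 + |∇u|²) + ω̃·∇u) = e^{-μu}`, i.e. the Lambertian equation.
-/

open scoped RealInnerProductSpace

section InnerProductSpace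

variable {F : Type*} [NormedAddCommGroup F] [InnerProductSpace ℝ F]

theorem HasDerivAt.comp_hasGradientAt [CompleteSpace F] {g : ℝ → ℝ} {g' : ℝ} {f : F → ℝ}
    {f' x : F} (hg : HasDerivAt g g' (f x)) (hf : HasGradientAt f f' x) :
    HasGradientAt (g ∘ f) (g' • f') x := by
  rw [hasGradientAt_iff_hasFDerivAt] at hf ⊢
  rw [map_smul]
  exact hg.comp_hasFDerivAt x hf

theorem isLeast_inner_add_sphere [Nontrivial F] (c : F) (d : ℝ) :
    IsLeast ((fun a => ⟪c, a⟫ + d) '' Metric.sphere 0 1) (-‖c‖ + d) := by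
  refine ⟨?_, ?_⟩
  · rcases eq_or_ne c 0 with rfl | hc
    · obtain ⟨a, ha⟩ := NormedSpace.sphere_nonempty (E := F) (x := 0) (r := 1) |>.mpr zero_le_one
      exact ⟨a, ha, by simp⟩
    · have hc' : ‖c‖ ≠ 0 := norm_ne_zero_iff.mpr hc
      refine ⟨-‖c‖⁻¹ • c, ?_, ?_⟩
      · simp [norm_smul, hc']
      · simp only [real_inner_smul_right, real_inner_self_eq_norm_sq]
        field_simp
  · rintro _ ⟨a, ha, rfl⟩
    rw [mem_sphere_zero_iff_norm] at ha
    have := neg_le_of_abs_le (abs_real_inner_le_norm c a)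
    rw [ha, mul_one] at this
    linarith

end InnerProductSpace

noncomputable def kruzkovTransform (μ t : ℝ) : ℝ := (1 - Real.exp (-(μ * t))) / μ

theorem mul_kruzkovTransform {μ : ℝ} (hμ : μ ≠ 0) (t : ℝ) :
    μ * kruzkovTransform μ t = 1 - Real.exp (-(μ * t)) := by
  rw [kruzkovTransform, mul_div_cancel₀ _ hμ]

theorem hasDerivAt_kruzkovTransform {μ : ℝ} (hμ : μ ≠ 0) (t : ℝ) :
    HasDerivAt (kruzkovTransform μ) (Real.exp (-(μ * t))) t := by
  have hlin := ((hasDerivAt_id' t).const_mul μ).fun_neg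
  exact ((hlin.exp.const_sub 1).div_const μ).congr_deriv (by field_simp)

theorem norm_vec3_neg_one (p : EuclideanSpace ℝ (Fin 2)) :
    ‖!₂[p 0, p 1, -1]‖ = Real.sqrt (1 + ‖p‖ ^ 2) := by
  rw [EuclideanSpace.norm_eq, EuclideanSpace.norm_eq, Real.sq_sqrt (by positivity)]
  simp only [Real.norm_eq_abs, sq_abs, Fin.sum_univ_three, Fin.sum_univ_two, Matrix.cons_val_zero,
    Matrix.cons_val_one, Matrix.cons_val, even_two, Even.neg_pow, one_pow]
  rw [add_comm 1]

theorem sInf_lambertian_objective (ω : EuclideanSpace ℝ (Fin 3)) (hω3 : 0 < ω 2) {I E : ℝ}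
    (hIE : 0 ≤ I * E) (p : EuclideanSpace ℝ (Fin 2)) :
    sInf ((fun a : EuclideanSpace ℝ (Fin 3) =>
        (1 / ω 2) * ((I * a 0 - ω 0) * (E * p 0) + (I * a 1 - ω 1) * (E * p 1))
          - (I * a 2 / ω 2) * E + 1) '' Metric.sphere 0 1)
      = 1 - E / ω 2 * (I * Real.sqrt (1 + ‖p‖ ^ 2) + (ω 0 * p 0 + ω 1 * p 1)) := by
  set k := I * E / ω 2
  set d := 1 - E / ω 2 * (ω 0 * p 0 + ω 1 * p 1)
  have hobj : (fun a : EuclideanSpace ℝ (Fin 3) =>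
        (1 / ω 2) * ((I * a 0 - ω 0) * (E * p 0) + (I * a 1 - ω 1) * (E * p 1))
          - (I * a 2 / ω 2) * E + 1)
      = fun a => ⟪k • !₂[p 0, p 1, -1], a⟫ + d := by
    funext a
    simp only [EuclideanSpace.inner_eq_star_dotProduct, dotProduct, WithLp.ofLp_smul,
      Matrix.smul_cons, smul_eq_mul, Matrix.smul_empty, Pi.star_apply, star_trivial,
      Fin.sum_univ_three, Matrix.cons_val_zero, Matrix.cons_val_one, Matrix.cons_val, k, d]
    field_simp
    ring
  have hk : ‖k‖ = k := Real.norm_of_nonneg (div_nonneg hIE hω3.le)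
  rw [hobj, (isLeast_inner_add_sphere _ d).csInf_eq, norm_smul, hk, norm_vec3_neg_one]
  ring

theorem lambertian_fixed_point_form_general (ω : EuclideanSpace ℝ (Fin 3))
    (hω3 : 0 < ω 2) (μ : ℝ) (hμ : 0 < μ) (I : ℝ) (hI : 0 ≤ I)
    (u : EuclideanSpace ℝ (Fin 2) → ℝ) (x : EuclideanSpace ℝ (Fin 2))
    (hu : DifferentiableAt ℝ u x)
    (v : EuclideanSpace ℝ (Fin 2) → ℝ)
    (hv : v = fun y => (1 - Real.exp (-(μ * u y))) / μ) :
    (I * Real.sqrt (1 + ‖gradient u x‖ ^ 2)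
        + (ω 0 * gradient u x 0 + ω 1 * gradient u x 1) - ω 2 = 0)
    ↔ μ * v x = sInf ((fun a : EuclideanSpace ℝ (Fin 3) =>
        (1 / ω 2) * ((I * a 0 - ω 0) * gradient v x 0 + (I * a 1 - ω 1) * gradient v x 1)
          - (I * a 2 / ω 2) * (1 - μ * v x) + 1) ''
        Metric.sphere (0 : EuclideanSpace ℝ (Fin 3)) 1) := by
  set E := Real.exp (-(μ * u x))
  have hv' : v = kruzkovTransform μ ∘ u := hv
  have hvx : μ * v x = 1 - E := by rw [hv']; exact mul_kruzkovTransform hμ.ne' (u x)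
  have hgrad : gradient v x = E • gradient u x := by
    rw [hv']
    exact ((hasDerivAt_kruzkovTransform hμ.ne' (u x)).comp_hasGradientAt
      hu.hasGradientAt).gradient
  rw [hgrad, hvx, sub_sub_cancel]
  simp only [PiLp.smul_apply, smul_eq_mul]
  rw [sInf_lambertian_objective ω hω3 (E := E) (mul_nonneg hI (Real.exp_pos _).le)]
  have hE : E / ω 2 ≠ 0 := div_ne_zero (Real.exp_pos _).ne' hω3.ne'
  rw [sub_eq_zero, eq_comm (a := 1 - E), sub_right_inj]
  nth_rewrite 2 [← div_mul_cancel₀ E hω3.ne']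
  exact (mul_right_inj' hE).symm

/-- Equivalence between the orthographic Lambertian Shape-from-Shading equation
`I√(1 + |∇u|²) + ω̃·∇u − ω₃ = 0` and its fixed-point form
`μv = min_{a ∈ ∂B₃} { b^L(x,a)·∇v + f^L(x,a,v) }`, where `v = (1 − exp(−μu))/μ` is the
Kružkov transform of `u`, `b^L(x,a) = (1/ω₃)(I a₁ − ω₁, I a₂ − ω₂)` and
`f^L(x,a,v) = −(I a₃/ω₃)(1 − μv) + 1`; the minimum over the compact unit sphere is the
infimum, where it is attained. -/
theorem lambertian_fixed_point_form (ω : EuclideanSpace ℝ (Fin 3)) (hω : ‖ω‖ = 1)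
    (hω3 : 0 < ω 2) (μ : ℝ) (hμ : 0 < μ) (I : ℝ) (hI : 0 ≤ I)
    (u : EuclideanSpace ℝ (Fin 2) → ℝ) (x : EuclideanSpace ℝ (Fin 2))
    (hu : DifferentiableAt ℝ u x)
    (v : EuclideanSpace ℝ (Fin 2) → ℝ)
    (hv : v = fun y => (1 - Real.exp (-(μ * u y))) / μ) :
    (I * Real.sqrt (1 + ‖gradient u x‖ ^ 2)
        + (ω 0 * gradient u x 0 + ω 1 * gradient u x 1) - ω 2 = 0)
    ↔ μ * v x = sInf ((fun a : EuclideanSpace ℝ (Fin 3) =>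
        (1 / ω 2) * ((I * a 0 - ω 0) * gradient v x 0 + (I * a 1 - ω 1) * gradient v x 1)
          - (I * a 2 / ω 2) * (1 - μ * v x) + 1) ''
        Metric.sphere (0 : EuclideanSpace ℝ (Fin 3)) 1) :=
  lambertian_fixed_point_form_general ω hω3 μ hμ I hI u x hu v hv
end
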